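/- Let L ∈ ℕ, let ℒ be the (finite) set of multi-indices (l,m,n) ∈ ℕ³ with l+m+n ≤ L, let x₁,…,x_N ∈ ℝ³ be grid points, and let Λ be the N × |ℒ| matrix with entries Λ_{i,(lmn)} = Λ_{lmn}(x_i). Suppose Λ = Q·R where Q is N × |ℒ| with QᵀQ = I and R is an invertible |ℒ| × |ℒ| matrix. Then for every polynomial f in three variables of total degree at most L, setting f_p = (f(x₁),…,f(x_N)) ∈ ℝ^N and F = R⁻¹·Qᵀ·f_p ∈ ℝ^{|ℒ|}, one has f(r) = Σ_{(l,m,n)∈ℒ} Λ_{lmn}(r)·F_{lmn} for every r ∈ ℝ³. (The free mesh transform reproduces polynomials of degree ≤ L exactly at every point.) -/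

import Mathlib

/-!
Scaled by `l! m! n!`, the geometric moments are exactly the monomials of total degree `≤ L`, so
the samples of `f` are `f_p = Λ c`, where `c` is the coefficient vector of `f` scaled by the same
factorials. Since `QᵀQ = I` and `R` is invertible, `R⁻¹Qᵀ` is a left inverse of `Λ = QR`, hence
`F = c`, and `∑ Λ_{lmn}(r) F_{lmn}` is the monomial expansion of `f` evaluated at `r`.
-/

open Matrix

/-- Geometric moments `Λ_{lmn}(x) = x₁^l x₂^m x₃^n / (l! m! n!)` for
`x : Fin 3 → ℝ`. -/
noncomputable def geomMoment (p : ℕ × ℕ × ℕ) (x : Fin 3 → ℝ) : ℝ :=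
  x 0 ^ p.1 * x 1 ^ p.2.1 * x 2 ^ p.2.2 /
    ((p.1.factorial : ℝ) * (p.2.1.factorial : ℝ) * (p.2.2.factorial : ℝ))

theorem Matrix.nonsing_inv_mul_transpose_mul_mul_eq_one {m n α : Type*} [CommRing α]
    [Fintype m] [Fintype n] [DecidableEq n] {Q : Matrix m n α} {R : Matrix n n α}
    (hQ : Qᵀ * Q = 1) (hR : IsUnit R.det) : R⁻¹ * Qᵀ * (Q * R) = 1 := by
  rw [Matrix.mul_assoc, ← Matrix.mul_assoc Qᵀ, hQ, Matrix.one_mul, nonsing_inv_mul R hR]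

theorem MvPolynomial.eval_eq_sum_of_support_subset {σ R : Type*} [Fintype σ] [CommSemiring R]
    {f : MvPolynomial σ R} {T : Finset (σ →₀ ℕ)} (h : f.support ⊆ T) (x : σ → R) :
    eval x f = ∑ d ∈ T, coeff d f * ∏ i, x i ^ d i := by
  rw [eval_eq']
  exact Finset.sum_subset h fun d _ hd => by rw [notMem_support_iff.mp hd, zero_mul]

noncomputable def multiIndexEquiv : ℕ × ℕ × ℕ ≃ (Fin 3 →₀ ℕ) where
  toFun p := Finsupp.equivFunOnFinite.symm ![p.1, p.2.1, p.2.2]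
  invFun d := (d 0, d 1, d 2)
  left_inv p := rfl
  right_inv d := by ext i; fin_cases i <;> rfl

theorem multiIndexEquiv_apply (p : ℕ × ℕ × ℕ) (i : Fin 3) :
    multiIndexEquiv p i = ![p.1, p.2.1, p.2.2] i := rfl

theorem multiIndexEquiv_symm_apply (d : Fin 3 →₀ ℕ) :
    multiIndexEquiv.symm d = (d 0, d 1, d 2) := rfl

noncomputable def geomCoeff (f : MvPolynomial (Fin 3) ℝ) (p : ℕ × ℕ × ℕ) : ℝ :=
  MvPolynomial.coeff (multiIndexEquiv p) f *
    ((p.1.factorial : ℝ) * (p.2.1.factorial : ℝ) * (p.2.2.factorial : ℝ))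

theorem geomMoment_mul_geomCoeff (f : MvPolynomial (Fin 3) ℝ) (p : ℕ × ℕ × ℕ) (r : Fin 3 → ℝ) :
    geomMoment p r * geomCoeff f p =
      MvPolynomial.coeff (multiIndexEquiv p) f * ∏ i, r i ^ multiIndexEquiv p i := by
  have hfact : ((p.1.factorial : ℝ) * (p.2.1.factorial : ℝ) * (p.2.2.factorial : ℝ)) ≠ 0 := by
    positivity
  simp only [geomMoment, geomCoeff, Fin.prod_univ_three, multiIndexEquiv_apply,
    Matrix.cons_val_zero, Matrix.cons_val_one, Matrix.cons_val_two,
    Matrix.tail_cons, Matrix.head_cons]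
  field_simp

theorem eval_eq_sum_geomMoment_mul_geomCoeff {L : ℕ} {S : Finset (ℕ × ℕ × ℕ)}
    (hS : ∀ p : ℕ × ℕ × ℕ, p ∈ S ↔ p.1 + p.2.1 + p.2.2 ≤ L)
    {f : MvPolynomial (Fin 3) ℝ} (hf : f.totalDegree ≤ L) (r : Fin 3 → ℝ) :
    MvPolynomial.eval r f = ∑ p : S, geomMoment p r * geomCoeff f p := by
  have hsupp : f.support ⊆ S.map multiIndexEquiv.toEmbedding := fun d hd => by
    have hdeg := (MvPolynomial.le_totalDegree hd).trans hf
    rw [Finsupp.sum_fintype _ _ fun _ => rfl, Fin.sum_univ_three] at hdeg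
    rw [Finset.mem_map_equiv, hS, multiIndexEquiv_symm_apply]
    exact hdeg
  rw [MvPolynomial.eval_eq_sum_of_support_subset hsupp r, Finset.sum_map, ← Finset.sum_coe_sort S]
  exact Finset.sum_congr rfl fun p _ => (geomMoment_mul_geomCoeff f p r).symm

/-- The free mesh transform reproduces polynomials of total degree ≤ L exactly
at every point: if `Λ = Q·R` with `QᵀQ = I` and `R` invertible, where
`Λ_{i,(lmn)} = Λ_{lmn}(x_i)` over all multi-indices of total degree ≤ L,
then for every trivariate polynomial `f` of total degree ≤ L, with sampled
values `f_p` and coefficients `F = R⁻¹·Qᵀ·f_p`, one has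
`f(r) = ∑_{(l,m,n)} Λ_{lmn}(r) · F_{lmn}` for every `r ∈ ℝ³`. -/
theorem free_mesh_transform_reproduces_polynomials
    (L N : ℕ) (x : Fin N → (Fin 3 → ℝ))
    (S : Finset (ℕ × ℕ × ℕ))
    (hS : ∀ p : ℕ × ℕ × ℕ, p ∈ S ↔ p.1 + p.2.1 + p.2.2 ≤ L)
    (Λ Q : Matrix (Fin N) S ℝ) (R : Matrix S S ℝ)
    (hΛ : ∀ (i : Fin N) (p : S), Λ i p = geomMoment (p : ℕ × ℕ × ℕ) (x i))
    (hQR : Λ = Q * R) (hQ : Qᵀ * Q = 1) (hR : IsUnit R.det)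
    (f : MvPolynomial (Fin 3) ℝ) (hf : f.totalDegree ≤ L)
    (fp : Fin N → ℝ) (hfp : ∀ i : Fin N, fp i = MvPolynomial.eval (x i) f)
    (F : S → ℝ) (hF : F = (R⁻¹ * Qᵀ).mulVec fp) :
    ∀ r : Fin 3 → ℝ,
      MvPolynomial.eval r f = ∑ p : S, geomMoment (p : ℕ × ℕ × ℕ) r * F p := by
  set c : S → ℝ := fun p => geomCoeff f p
  have hfp_eq : fp = Λ *ᵥ c := funext fun i => by
    simp only [hfp i, eval_eq_sum_geomMoment_mul_geomCoeff hS hf, mulVec, dotProduct, hΛ, c]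
  have hF_eq : F = c := by
    rw [hF, hfp_eq, mulVec_mulVec, hQR, nonsing_inv_mul_transpose_mul_mul_eq_one hQ hR, one_mulVec]
  intro r
  rw [hF_eq, eval_eq_sum_geomMoment_mul_geomCoeff hS hf]
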